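/- Let N ≥ 2, d ≥ 2, k ≥ 2 be integers, let ψ : (Fin N → Fin d) → ℂ be a unit vector that is genuinely multipartite entangled (GME), and let 𝓕 be a finite family of subsets of Fin N, each of cardinality at most k. If ψ is 𝓕-UDP, then (k − 1) · |𝓕| ≥ N − 1; equivalently, at least ⌈(N − 1)/(k − 1)⌉ marginals of body size at most k are required to uniquely determine a GME pure state among pure states. -/

import Mathlib

open Finset

/-- Combine `x` defined on `S` with `z` defined on the complement of `S`
into a full assignment `Fin N → Fin d`. -/
def joinFun {N d : ℕ} (S : Finset (Fin N))
    (x : {i // i ∈ S} → Fin d) (z : {i // i ∉ S} → Fin d) : Fin N → Fin d :=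
  fun i => if h : i ∈ S then x ⟨i, h⟩ else z ⟨i, h⟩

/-- The marginal (reduced density matrix) of the pure state `ψ` on the parties `S`. -/
noncomputable def marginal {N d : ℕ} (S : Finset (Fin N)) (ψ : (Fin N → Fin d) → ℂ)
    (x y : {i // i ∈ S} → Fin d) : ℂ :=
  ∑ z : {i // i ∉ S} → Fin d,
    ψ (joinFun S x z) * (starRingEnd ℂ) (ψ (joinFun S y z))

/-- `ψ` is a unit vector. -/
def UnitVec {N d : ℕ} (ψ : (Fin N → Fin d) → ℂ) : Prop :=
  ∑ x, ‖ψ x‖ ^ 2 = 1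

/-- `ψ` is genuinely multipartite entangled. -/
def GME {N d : ℕ} (ψ : (Fin N → Fin d) → ℂ) : Prop :=
  ∀ J : Finset (Fin N), J.Nonempty → J ≠ Finset.univ →
    ¬ ∃ (α : ({i // i ∈ J} → Fin d) → ℂ) (β : ({i // i ∉ J} → Fin d) → ℂ),
      ∀ x z, ψ (joinFun J x z) = α x * β z

/-- `ψ` is uniquely determined by the family of marginals `𝓕` among pure states. -/
def UDP {N d : ℕ} (𝓕 : Finset (Finset (Fin N))) (ψ : (Fin N → Fin d) → ℂ) : Prop :=
  ∀ φ : (Fin N → Fin d) → ℂ, UnitVec φ →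
    (∀ F ∈ 𝓕, marginal F φ = marginal F ψ) →
    ∃ c : ℂ, ‖c‖ = 1 ∧ φ = c • ψ

/-!
Suppose `(k - 1) |𝓕| < N - 1`. Starting from `{0}` and repeatedly absorbing a set of `𝓕` that
meets the current set, each step adds at most `k - 1` parties, so we end at a proper nonempty `J`
such that every `F ∈ 𝓕` lies inside `J` or inside `Jᶜ`. Reshape `ψ` into the matrix `M` with rows
indexed by `J` and columns by `Jᶜ`. Marginals inside `J` only see `M Mᴴ` and marginals inside `Jᶜ`
only see `Mᴴ M`, so `U M` has the same `𝓕`-marginals as `M` for every unitary `U` commuting with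
`M Mᴴ`. Taking for `U` the reflection in a unit eigenvector `v` of `M Mᴴ` with nonzero eigenvalue,
`U M = c M` forces `M = v (vᴴ M)`, so `ψ` is a product across `J | Jᶜ`.
-/

open Matrix
open scoped ComplexOrder

namespace Matrix

variable {𝕜 m n : Type*} [RCLike 𝕜] [Fintype m] [Fintype n]

lemma IsHermitian.star_vecMul_eq_smul {A : Matrix m m 𝕜} (hA : A.IsHermitian) {v : m → 𝕜}
    {t : ℝ} (hv : A *ᵥ v = t • v) : star v ᵥ* A = t • star v := by
  rw [← hA.eq, ← star_mulVec, hv, star_smul, star_trivial]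

variable [DecidableEq m]

def householder (v : m → 𝕜) : Matrix m m 𝕜 := 1 - (2 : 𝕜) • vecMulVec v (star v)

lemma householder_mem_unitaryGroup {v : m → 𝕜} (hv : star v ⬝ᵥ v = 1) :
    householder v ∈ unitaryGroup m 𝕜 := by
  have hP : vecMulVec v (star v) * vecMulVec v (star v) = vecMulVec v (star v) := by
    rw [vecMulVec_mul, vecMul_vecMulVec, hv, one_smul]
  rw [mem_unitaryGroup_iff', householder, star_eq_conjTranspose, conjTranspose_sub,
    conjTranspose_one, conjTranspose_smul, conjTranspose_vecMulVec, star_star]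
  simp only [sub_mul, mul_sub, one_mul, mul_one, smul_mul_smul_comm, hP, star_ofNat]
  module

lemma householder_commute {A : Matrix m m 𝕜} (hA : A.IsHermitian) {v : m → 𝕜} {t : ℝ}
    (hv : A *ᵥ v = t • v) : Commute (householder v) A := by
  simp only [householder, Commute, SemiconjBy, sub_mul, mul_sub, one_mul, mul_one, smul_mul,
    Matrix.mul_smul, vecMulVec_mul, mul_vecMulVec, hv, hA.star_vecMul_eq_smul hv, smul_vecMulVec,
    vecMulVec_smul]

lemma eq_vecMulVec_of_householder_mul_eq_smul {M : Matrix m n 𝕜} {v : m → 𝕜} {c : 𝕜}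
    (hv : star v ⬝ᵥ v = 1) (hvM : star v ᵥ* M ≠ 0) (hc : householder v * M = c • M) :
    M = vecMulVec v (star v ᵥ* M) := by
  have hcM : (1 - c) • M = (2 : 𝕜) • vecMulVec v (star v ᵥ* M) := by
    rw [householder, Matrix.sub_mul, Matrix.one_mul, smul_mul, vecMulVec_mul] at hc
    rw [sub_smul, one_smul, ← hc]
    abel
  have hc' : c = -1 := by
    have hcw := congrArg (star v ᵥ* ·) hcM
    simp only [vecMul_smul, vecMul_vecMulVec, hv, one_smul] at hcw
    rw [← sub_eq_zero, ← sub_smul, smul_eq_zero] at hcw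
    linear_combination -hcw.resolve_right hvM
  rw [hc', show (1 : 𝕜) - -1 = 2 by norm_num] at hcM
  exact smul_right_injective _ two_ne_zero hcM

lemma exists_eq_vecMulVec_of_forall_unitary_commute (M : Matrix m n 𝕜)
    (h : ∀ U ∈ unitaryGroup m 𝕜, Commute U (M * Mᴴ) → ∃ c : 𝕜, U * M = c • M) :
    ∃ α β, M = vecMulVec α β := by
  by_cases hM : M = 0
  · exact ⟨0, 0, by rw [hM, zero_vecMulVec]⟩
  have hρ := isHermitian_mul_conjTranspose_self M
  obtain ⟨j, hj⟩ : ∃ j, hρ.eigenvalues j ≠ 0 := by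
    by_contra! h0
    exact hM (self_mul_conjTranspose_eq_zero.1 (hρ.eigenvalues_eq_zero_iff.1 (funext h0)))
  have hρv := hρ.mulVec_eigenvectorBasis j
  set v := (hρ.eigenvectorBasis j).ofLp
  have hv : star v ⬝ᵥ v = 1 := by
    rw [dotProduct_comm, ← EuclideanSpace.inner_eq_star_dotProduct]
    exact inner_self_eq_one_of_norm_eq_one ((hρ.eigenvectorBasis).orthonormal.1 j)
  have hvM : star v ᵥ* M ≠ 0 := by
    rw [ne_eq, ← vecMul_self_mul_conjTranspose_eq_zero, hρ.star_vecMul_eq_smul hρv, ← ne_eq,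
      smul_ne_zero_iff]
    exact ⟨hj, star_ne_zero.2 fun hv0 => by simp [hv0] at hv⟩
  obtain ⟨c, hc⟩ := h _ (householder_mem_unitaryGroup hv) (householder_commute hρ hρv)
  exact ⟨v, _, eq_vecMulVec_of_householder_mul_eq_smul hv hvM hc⟩

end Matrix

lemma Finset.exists_superset_forall_subset_or_disjoint {α : Type*} [DecidableEq α]
    (𝓕 : Finset (Finset α)) (J : Finset α) :
    ∃ J', J ⊆ J' ∧ (∀ F ∈ 𝓕, F ⊆ J' ∨ Disjoint F J') ∧
      J'.card ≤ J.card + ∑ F ∈ 𝓕, (F.card - 1) := by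
  induction 𝓕 using Finset.strongInduction generalizing J with
  | H 𝓕 ih =>
    by_cases hall : ∀ F ∈ 𝓕, F ⊆ J ∨ Disjoint F J
    · exact ⟨J, subset_rfl, hall, le_self_add⟩
    push Not at hall
    obtain ⟨F, hF, -, hFJ⟩ := hall
    obtain ⟨J', hJJ', hsplit, hcard⟩ := ih (𝓕.erase F) (erase_ssubset hF) (J ∪ F)
    refine ⟨J', subset_union_left.trans hJJ', fun G hG => ?_, ?_⟩
    · by_cases hGF : G = F
      · exact Or.inl (hGF ▸ subset_union_right.trans hJJ')
      · exact hsplit G (mem_erase.2 ⟨hGF, hG⟩)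
    · have hJF := card_union_add_card_inter J F
      have hinter : 0 < (J ∩ F).card :=
        card_pos.2 (not_disjoint_iff_nonempty_inter.1 (fun h => hFJ h.symm))
      have hsum := sum_erase_add 𝓕 (fun G => G.card - 1) hF
      have hF0 : 0 < F.card := hinter.trans_le (card_le_card inter_subset_right)
      omega

section Marginal

variable {N d : ℕ}

lemma sum_eq_sum_sum_joinFun {M : Type*} [AddCommMonoid M] (S : Finset (Fin N))
    (f : (Fin N → Fin d) → M) : ∑ w, f w = ∑ x, ∑ z, f (joinFun S x z) := by
  rw [← (Equiv.piEquivPiSubtypeProd (· ∈ S) fun _ => Fin d).symm.sum_comp,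
    Fintype.sum_prod_type]
  rfl

def matricize (J : Finset (Fin N)) (ψ : (Fin N → Fin d) → ℂ) :
    Matrix ({i // i ∈ J} → Fin d) ({i // i ∉ J} → Fin d) ℂ :=
  Matrix.of fun x z => ψ (joinFun J x z)

def unmatricize (J : Finset (Fin N))
    (A : Matrix ({i // i ∈ J} → Fin d) ({i // i ∉ J} → Fin d) ℂ) : (Fin N → Fin d) → ℂ :=
  fun w => A (fun i => w i) (fun i => w i)

@[simp]
lemma matricize_unmatricize (J : Finset (Fin N))
    (A : Matrix ({i // i ∈ J} → Fin d) ({i // i ∉ J} → Fin d) ℂ) :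
    matricize J (unmatricize J A) = A := by
  ext x z
  exact congrArg (Function.uncurry A)
    ((Equiv.piEquivPiSubtypeProd (· ∈ J) fun _ => Fin d).apply_symm_apply (x, z))

lemma matricize_smul (J : Finset (Fin N)) (c : ℂ) (ψ : (Fin N → Fin d) → ℂ) :
    matricize J (c • ψ) = c • matricize J ψ :=
  rfl

lemma marginal_eq_matricize_mul_conjTranspose (J : Finset (Fin N)) (ψ : (Fin N → Fin d) → ℂ) :
    marginal J ψ = matricize J ψ * (matricize J ψ)ᴴ := by
  ext x y
  simp [marginal, matricize, mul_apply]

lemma sum_norm_sq_eq_sum_re_marginal (J : Finset (Fin N)) (ψ : (Fin N → Fin d) → ℂ) :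
    ∑ w, ‖ψ w‖ ^ 2 = ∑ x, (marginal J ψ x x).re := by
  rw [sum_eq_sum_sum_joinFun J]
  simp [marginal, Complex.mul_conj, Complex.sq_norm]

lemma UnitVec.of_marginal_eq {J : Finset (Fin N)} {φ ψ : (Fin N → Fin d) → ℂ}
    (hψ : UnitVec ψ) (h : marginal J φ = marginal J ψ) : UnitVec φ := by
  rw [UnitVec, sum_norm_sq_eq_sum_re_marginal J, h, ← sum_norm_sq_eq_sum_re_marginal]
  exact hψ

section Subset

variable {F S : Finset (Fin N)}

def extendToSuperset (x : {i // i ∈ F} → Fin d) (t : {i // i ∈ S ∧ i ∉ F} → Fin d) :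
    {i // i ∈ S} → Fin d :=
  fun i => if h : i.1 ∈ F then x ⟨i, h⟩ else t ⟨i, i.2, h⟩

def complSplitOfSubset (hFS : F ⊆ S) :
    ({i // i ∉ F} → Fin d) ≃ ({i // i ∈ S ∧ i ∉ F} → Fin d) × ({i // i ∉ S} → Fin d) where
  toFun z := (fun i => z ⟨i, i.2.2⟩, fun i => z ⟨i, fun hF => i.2 (hFS hF)⟩)
  invFun p i := if h : i.1 ∈ S then p.1 ⟨i, h, i.2⟩ else p.2 ⟨i, h⟩
  left_inv z := by
    funext i
    dsimp only
    split <;> rfl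
  right_inv p := Prod.ext (funext fun i => dif_pos i.2.1) (funext fun i => dif_neg i.2)

lemma joinFun_complSplitOfSubset_symm (hFS : F ⊆ S) (x : {i // i ∈ F} → Fin d)
    (p : ({i // i ∈ S ∧ i ∉ F} → Fin d) × ({i // i ∉ S} → Fin d)) :
    joinFun F x ((complSplitOfSubset hFS).symm p) =
      joinFun S (extendToSuperset x p.1) p.2 := by
  funext i
  simp only [joinFun, complSplitOfSubset, extendToSuperset, Equiv.coe_fn_symm_mk]
  by_cases hF : i ∈ F
  · simp [hF, hFS hF]
  · by_cases hS : i ∈ S <;> simp [hF, hS]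

lemma marginal_eq_sum_marginal_of_subset (hFS : F ⊆ S) (φ : (Fin N → Fin d) → ℂ)
    (x y : {i // i ∈ F} → Fin d) :
    marginal F φ x y =
      ∑ t, marginal S φ (extendToSuperset x t) (extendToSuperset y t) := by
  rw [marginal, ← (complSplitOfSubset hFS).symm.sum_comp, Fintype.sum_prod_type]
  simp only [joinFun_complSplitOfSubset_symm, marginal]

lemma marginal_eq_of_subset (hFS : F ⊆ S) {φ ψ : (Fin N → Fin d) → ℂ}
    (h : marginal S φ = marginal S ψ) :
    marginal F φ = marginal F ψ := by
  funext x y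
  rw [marginal_eq_sum_marginal_of_subset hFS, marginal_eq_sum_marginal_of_subset hFS, h]

end Subset

section Compl

variable (J : Finset (Fin N))

lemma joinFun_compl (x : {i // i ∈ Jᶜ} → Fin d) (z : {i // i ∉ Jᶜ} → Fin d) :
    joinFun Jᶜ x z =
      joinFun J (fun i => z ⟨i, by simp⟩) (fun i => x ⟨i, mem_compl.2 i.2⟩) := by
  funext i
  by_cases hi : i ∈ J <;> simp [joinFun, hi]

def complComplArrowEquiv : ({i // i ∉ Jᶜ} → Fin d) ≃ ({i // i ∈ J} → Fin d) :=
  Equiv.arrowCongr (Equiv.subtypeEquivRight fun _ => by simp) (Equiv.refl _)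

lemma marginal_compl_apply (φ : (Fin N → Fin d) → ℂ) (x y : {i // i ∈ Jᶜ} → Fin d) :
    marginal Jᶜ φ x y = ((matricize J φ)ᴴ * matricize J φ)
      (fun i => y ⟨i, mem_compl.2 i.2⟩) (fun i => x ⟨i, mem_compl.2 i.2⟩) := by
  rw [marginal, ← (complComplArrowEquiv J).symm.sum_comp]
  simp only [joinFun_compl, mul_apply, conjTranspose_apply, matricize, of_apply]
  exact Finset.sum_congr rfl fun _ _ => mul_comm _ _

lemma marginal_compl_eq_of_conjTranspose_mul_eq {φ ψ : (Fin N → Fin d) → ℂ}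
    (h : (matricize J φ)ᴴ * matricize J φ = (matricize J ψ)ᴴ * matricize J ψ) :
    marginal Jᶜ φ = marginal Jᶜ ψ := by
  funext x y
  rw [marginal_compl_apply, marginal_compl_apply, h]

end Compl

lemma UDP.exists_mul_matricize_eq_smul {𝓕 : Finset (Finset (Fin N))}
    {ψ : (Fin N → Fin d) → ℂ} (hUDP : UDP 𝓕 ψ) (hψ : UnitVec ψ) {J : Finset (Fin N)}
    (hsplit : ∀ F ∈ 𝓕, F ⊆ J ∨ Disjoint F J)
    {U : Matrix ({i // i ∈ J} → Fin d) ({i // i ∈ J} → Fin d) ℂ}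
    (hU : U ∈ unitaryGroup ({i // i ∈ J} → Fin d) ℂ) (hUM : Commute U (matricize J ψ * (matricize J ψ)ᴴ)) :
    ∃ c : ℂ, U * matricize J ψ = c • matricize J ψ := by
  set M := matricize J ψ
  set φ := unmatricize J (U * M)
  have hφ : matricize J φ = U * M := matricize_unmatricize J _
  have hJ : marginal J φ = marginal J ψ := by
    rw [marginal_eq_matricize_mul_conjTranspose, marginal_eq_matricize_mul_conjTranspose, hφ]
    calc U * M * (U * M)ᴴ = U * (M * Mᴴ) * star U := by
          simp only [conjTranspose_mul, star_eq_conjTranspose, Matrix.mul_assoc]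
      _ = M * Mᴴ := by rw [hUM.eq, Matrix.mul_assoc, mem_unitaryGroup_iff.1 hU, Matrix.mul_one]
  have hJc : marginal Jᶜ φ = marginal Jᶜ ψ := by
    refine marginal_compl_eq_of_conjTranspose_mul_eq J ?_
    rw [hφ, conjTranspose_mul, Matrix.mul_assoc, ← Matrix.mul_assoc Uᴴ, ← star_eq_conjTranspose,
      mem_unitaryGroup_iff'.1 hU, Matrix.one_mul]
  obtain ⟨c, -, hc⟩ := hUDP φ (hψ.of_marginal_eq hJ) fun F hF =>
    (hsplit F hF).elim (marginal_eq_of_subset · hJ) fun h =>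
      marginal_eq_of_subset (subset_compl_iff_disjoint_right.2 h) hJc
  exact ⟨c, by rw [← hφ, hc, matricize_smul]⟩

end Marginal

theorem gme_UDP_card_lower_bound_general (N d k : ℕ)
    (ψ : (Fin N → Fin d) → ℂ) (hψ : UnitVec ψ) (hGME : GME ψ)
    (𝓕 : Finset (Finset (Fin N))) (hsize : ∀ F ∈ 𝓕, F.card ≤ k)
    (hUDP : UDP 𝓕 ψ) :
    (k - 1) * 𝓕.card ≥ N - 1 := by
  by_contra! hlt
  obtain ⟨J, h0J, hsplit, hJcard⟩ :=
    exists_superset_forall_subset_or_disjoint 𝓕 {(⟨0, by omega⟩ : Fin N)}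
  have hJlt : J.card < N := by
    have hsum : ∑ F ∈ 𝓕, (F.card - 1) ≤ (k - 1) * 𝓕.card := by
      rw [mul_comm, ← smul_eq_mul]
      exact sum_le_card_nsmul _ _ _ fun F hF => Nat.sub_le_sub_right (hsize F hF) 1
    rw [card_singleton] at hJcard
    omega
  refine hGME J ⟨_, h0J (mem_singleton_self _)⟩ (fun h => by simp [h] at hJlt) ?_
  obtain ⟨α, β, hαβ⟩ := exists_eq_vecMulVec_of_forall_unitary_commute (matricize J ψ)
    fun U hU hUM => hUDP.exists_mul_matricize_eq_smul hψ hsplit hU hUM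
  exact ⟨α, β, fun x z => congrFun (congrFun hαβ x) z⟩

/-- If a GME pure state `ψ` is `𝓕`-UDP, where every set in `𝓕`
has cardinality at most `k`, then `(k - 1) * |𝓕| ≥ N - 1`; equivalently, at
least `⌈(N - 1)/(k - 1)⌉` marginals of body size at most `k` are needed. -/
theorem gme_UDP_card_lower_bound (N d k : ℕ) (hN : 2 ≤ N) (hd : 2 ≤ d) (hk : 2 ≤ k)
    (ψ : (Fin N → Fin d) → ℂ) (hψ : UnitVec ψ) (hGME : GME ψ)
    (𝓕 : Finset (Finset (Fin N))) (hsize : ∀ F ∈ 𝓕, F.card ≤ k)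
    (hUDP : UDP 𝓕 ψ) :
    (k - 1) * 𝓕.card ≥ N - 1 :=
  gme_UDP_card_lower_bound_general N d k ψ hψ hGME 𝓕 hsize hUDP
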